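/- For every integer d ≥ 1, the spectrum of the discrete Laplacian Δ, as a bounded operator on ℓ²(ℤᵈ), equals the real segment [−d,d] = {λ ∈ ℂ : Im λ = 0 and |Re λ| ≤ d}. -/

import Mathlib

/-- `L` is the discrete Laplacian on `ℓ²(ℤᵈ)`:
`(Lf)(n) = (1/2)∑_{j=1}^d (f(n+eⱼ) + f(n-eⱼ))`. -/
def IsDiscreteLaplacian (d : ℕ)
    (L : lp (fun _ : Fin d → ℤ => ℂ) 2 →L[ℂ] lp (fun _ : Fin d → ℤ => ℂ) 2) : Prop :=
  ∀ (f : lp (fun _ : Fin d → ℤ => ℂ) 2) (n : Fin d → ℤ),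
    L f n = (1 / 2) * ∑ j : Fin d, (f (n + Pi.single j 1) + f (n - Pi.single j 1))

/-!
Writing `Δ = ½ ∑ⱼ (Sⱼ + Sⱼ⋆)`, with `Sⱼ` the unitary translation by `eⱼ`, shows that `Δ` is
self-adjoint of norm at most `d`, so its spectrum lies in `[-d, d]`. Conversely, every `d cos θ`
is an approximate eigenvalue: the plane wave `n ↦ exp (iθ ∑ⱼ nⱼ)` solves `Δφ = d cos θ φ`, and its
truncation to the cube `[0, N - 1]ᵈ` has squared norm `Nᵈ`, while the residual is bounded by `2d`
and supported on the `(N + 2)ᵈ - (N - 2)ᵈ = o(Nᵈ)` points of a boundary layer.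
-/

open Finset Filter Topology
open scoped ENNReal

noncomputable section

section Reindex

variable {𝕜 ι E : Type*} [RCLike 𝕜] [NormedAddCommGroup E] [InnerProductSpace 𝕜 E]

def lpReindex (e : ι ≃ ι) : lp (fun _ : ι => E) 2 ≃ₗᵢ[𝕜] lp (fun _ : ι => E) 2 where
  toFun f := ⟨fun n => f (e n), memℓp_gen <| e.summable_iff.mpr <|
    (memℓp_gen_iff (by norm_num)).mp (lp.memℓp f)⟩
  invFun f := ⟨fun n => f (e.symm n), memℓp_gen <| e.symm.summable_iff.mpr <|
    (memℓp_gen_iff (by norm_num)).mp (lp.memℓp f)⟩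
  map_add' _ _ := rfl
  map_smul' _ _ := rfl
  left_inv f := by ext; simp
  right_inv f := by ext; simp
  norm_map' f := by
    simp only [lp.norm_eq_tsum_rpow (by norm_num : 0 < (2 : ℝ≥0∞).toReal)]
    congr 1
    exact e.tsum_eq fun n => ‖f n‖ ^ (2 : ℝ≥0∞).toReal

@[simp] lemma lpReindex_apply (e : ι ≃ ι) (f : lp (fun _ : ι => E) 2) (n : ι) :
    lpReindex (𝕜 := 𝕜) e f n = f (e n) := rfl

lemma adjoint_lpReindex [CompleteSpace E] (e : ι ≃ ι) :
    ContinuousLinearMap.adjoint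
        (lpReindex (𝕜 := 𝕜) (E := E) e).toLinearIsometry.toContinuousLinearMap =
      (lpReindex e.symm).toLinearIsometry.toContinuousLinearMap := by
  refine ((ContinuousLinearMap.eq_adjoint_iff _ _).mpr fun f g => ?_).symm
  simp only [lp.inner_eq_tsum]
  simpa using (e.tsum_eq fun i => inner 𝕜 (f (e.symm i)) (g i)).symm

end Reindex

lemma lp.norm_sq_eq_sum {κ E : Type*} [NormedAddCommGroup E] (f : lp (fun _ : κ => E) 2)
    {s : Finset κ} (hs : ∀ n ∉ s, f n = 0) : ‖f‖ ^ 2 = ∑ n ∈ s, ‖f n‖ ^ 2 := by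
  have h := lp.norm_rpow_eq_tsum (p := 2) (by norm_num) f
  simp only [ENNReal.toReal_ofNat, Real.rpow_two] at h
  rw [h, tsum_eq_sum fun n hn => by simp [hs n hn]]

lemma tendsto_add_pow_sub_sub_pow_div_pow (a : ℝ) (d : ℕ) :
    Tendsto (fun N : ℕ => ((N + a) ^ d - (N - a) ^ d) / (N : ℝ) ^ d) atTop (𝓝 0) := by
  have h_cont : Tendsto (fun x : ℝ => (1 + a * x) ^ d - (1 - a * x) ^ d) (𝓝 0) (𝓝 0) := by
    simpa using (show Continuous (fun x : ℝ => (1 + a * x) ^ d - (1 - a * x) ^ d) by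
      fun_prop).tendsto 0
  refine (h_cont.comp tendsto_inv_atTop_nhds_zero_nat).congr' ?_
  filter_upwards [eventually_ne_atTop 0] with N hN
  have hN' : (N : ℝ) ≠ 0 := by exact_mod_cast hN
  simp only [Function.comp_apply]
  rw [sub_div, ← div_pow, ← div_pow, add_div, sub_div, div_self hN']
  ring

lemma exists_mul_cos_eq {d x : ℝ} (hx : |x| ≤ d) : ∃ θ, d * Real.cos θ = x := by
  have hxd : |x / d| ≤ 1 := by
    rw [abs_div]
    exact div_le_one_of_le₀ (hx.trans (le_abs_self d)) (abs_nonneg d)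
  refine ⟨Real.arccos (x / d), ?_⟩
  -- for `d = 0` this uses `x / 0 = 0`, and `hx` forces `x = 0`
  rw [Real.cos_arccos (abs_le.mp hxd).1 (abs_le.mp hxd).2]
  exact mul_div_cancel_of_imp' fun hd => abs_nonpos_iff.mp (hd ▸ hx)

lemma IsSelfAdjoint.spectrum_subset_segment {H : Type*} [NormedAddCommGroup H]
    [InnerProductSpace ℂ H] [CompleteSpace H] {T : H →L[ℂ] H} (hT : IsSelfAdjoint T) :
    spectrum ℂ T ⊆ {l : ℂ | l.im = 0 ∧ |l.re| ≤ ‖T‖} := by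
  intro z hz
  have hz_norm : ‖z‖ ≤ ‖T‖ * ‖(1 : H →L[ℂ] H)‖ := by
    simpa using spectrum.subset_closedBall_norm_mul T hz
  have hz_re : z = z.re := hT.mem_spectrum_eq_re hz
  refine ⟨by rw [hz_re]; exact Complex.ofReal_im _, ?_⟩
  calc |z.re| ≤ ‖z‖ := Complex.abs_re_le_norm z
    _ ≤ ‖T‖ * ‖(1 : H →L[ℂ] H)‖ := hz_norm
    _ ≤ ‖T‖ := mul_le_of_le_one_right (norm_nonneg T) ContinuousLinearMap.norm_id_le

lemma mem_spectrum_of_forall_exists_norm_lt {𝕜 E : Type*} [NontriviallyNormedField 𝕜]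
    [NormedAddCommGroup E] [NormedSpace 𝕜 E] {T : E →L[𝕜] E} {l : 𝕜}
    (h : ∀ ε > 0, ∃ f : E, ‖l • f - T f‖ < ε * ‖f‖) : l ∈ spectrum 𝕜 T := by
  rw [spectrum.mem_iff]
  rintro ⟨u, hu⟩
  set B : E →L[𝕜] E := ↑u⁻¹
  have hB : ∀ f : E, ‖f‖ ≤ ‖B‖ * ‖l • f - T f‖ := fun f => by
    have hf : B (l • f - T f) = f := by
      have h1 : (↑u⁻¹ * ↑u : E →L[𝕜] E) f = f := by rw [u.inv_mul]; rfl
      rwa [hu] at h1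
    simpa [hf] using B.le_opNorm (l • f - T f)
  obtain ⟨f, hf⟩ := h (‖B‖ + 1)⁻¹ (by positivity)
  have hBf := hB f
  rw [inv_mul_eq_div, lt_div_iff₀ (by positivity)] at hf
  nlinarith [norm_nonneg (l • f - T f)]

local notation "ℓ²ℤ[" d "]" => lp (fun _ : Fin d → ℤ => ℂ) 2

section Cube

variable {d : ℕ}

def cube (d : ℕ) (a b : ℤ) : Finset (Fin d → ℤ) := Fintype.piFinset fun _ => Icc a b

lemma mem_cube {a b : ℤ} {n : Fin d → ℤ} : n ∈ cube d a b ↔ ∀ j, a ≤ n j ∧ n j ≤ b := by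
  simp [cube]

lemma card_cube (a b : ℤ) : #(cube d a b) = (b + 1 - a).toNat ^ d := by
  simp [cube]

lemma cube_mono {a b a' b' : ℤ} (ha : a' ≤ a) (hb : b ≤ b') : cube d a b ⊆ cube d a' b' :=
  Fintype.piFinset_subset _ _ fun _ => Icc_subset_Icc ha hb

lemma add_single_mem_cube {a b : ℤ} {n : Fin d → ℤ} (hn : n ∈ cube d a b) (j : Fin d) :
    n + Pi.single j 1 ∈ cube d a (b + 1) := by
  rw [mem_cube] at hn ⊢
  intro k
  have := hn k
  simp only [Pi.add_apply, Pi.single_apply]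
  split_ifs <;> omega

lemma sub_single_mem_cube {a b : ℤ} {n : Fin d → ℤ} (hn : n ∈ cube d a b) (j : Fin d) :
    n - Pi.single j 1 ∈ cube d (a - 1) b := by
  rw [mem_cube] at hn ⊢
  intro k
  have := hn k
  simp only [Pi.sub_apply, Pi.single_apply]
  split_ifs <;> omega

end Cube

section PlaneWave

variable {d : ℕ}

def planeWave (θ : ℝ) (n : Fin d → ℤ) : ℂ := Complex.exp ((θ * ∑ j, n j : ℝ) * Complex.I)

lemma norm_planeWave (θ : ℝ) (n : Fin d → ℤ) : ‖planeWave θ n‖ = 1 :=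
  Complex.norm_exp_ofReal_mul_I _

lemma planeWave_add_single (θ : ℝ) (n : Fin d → ℤ) (j : Fin d) :
    planeWave θ (n + Pi.single j 1) = planeWave θ n * Complex.exp (θ * Complex.I) := by
  simp only [planeWave, ← Complex.exp_add, Pi.add_apply, Int.cast_add, sum_add_distrib]
  congr 1
  simp [Pi.single_apply]
  ring

lemma planeWave_sub_single (θ : ℝ) (n : Fin d → ℤ) (j : Fin d) :
    planeWave θ (n - Pi.single j 1) = planeWave θ n * Complex.exp (-(θ * Complex.I)) := by
  simp only [planeWave, ← Complex.exp_add, Pi.sub_apply, Int.cast_sub, sum_sub_distrib]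
  congr 1
  simp [Pi.single_apply]
  ring

lemma planeWave_add_single_add_sub_single (θ : ℝ) (n : Fin d → ℤ) (j : Fin d) :
    planeWave θ (n + Pi.single j 1) + planeWave θ (n - Pi.single j 1) =
      2 * Real.cos θ * planeWave θ n := by
  rw [planeWave_add_single, planeWave_sub_single, ← mul_add, Complex.ofReal_cos, Complex.cos,
    neg_mul]
  ring

end PlaneWave

section WeylVector

variable {d : ℕ}

def weylVector (d : ℕ) (θ : ℝ) (N : ℕ) : ℓ²ℤ[d] :=
  ⟨(cube d 0 (N - 1) : Set (Fin d → ℤ)).indicator (planeWave θ),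
    (memℓp_zero <| (cube d 0 (N - 1)).finite_toSet.subset
      Set.support_indicator_subset).of_exponent_ge zero_le⟩

variable {θ : ℝ} {N : ℕ} {n : Fin d → ℤ}

lemma weylVector_of_mem (hn : n ∈ cube d 0 (N - 1)) : weylVector d θ N n = planeWave θ n :=
  Set.indicator_of_mem (mem_coe.mpr hn) _

lemma weylVector_of_notMem (hn : n ∉ cube d 0 (N - 1)) : weylVector d θ N n = 0 :=
  Set.indicator_of_notMem (mt mem_coe.mp hn) _

lemma norm_weylVector_apply_le : ‖weylVector d θ N n‖ ≤ 1 :=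
  (norm_indicator_le_norm_self _ _).trans (norm_planeWave θ n).le

lemma norm_weylVector_sq : ‖weylVector d θ N‖ ^ 2 = (N : ℝ) ^ d := by
  rw [lp.norm_sq_eq_sum _ fun n hn => weylVector_of_notMem hn,
    sum_congr rfl fun n hn => by rw [weylVector_of_mem hn, norm_planeWave, one_pow],
    sum_const, card_cube, nsmul_one]
  push_cast
  congr
  omega

end WeylVector

namespace IsDiscreteLaplacian

variable {d : ℕ} {L : ℓ²ℤ[d] →L[ℂ] ℓ²ℤ[d]}

def shift (j : Fin d) : ℓ²ℤ[d] →L[ℂ] ℓ²ℤ[d] :=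
  (lpReindex (Equiv.addRight (Pi.single j 1))).toLinearIsometry.toContinuousLinearMap

lemma shift_apply (j : Fin d) (f : ℓ²ℤ[d]) (n : Fin d → ℤ) :
    shift j f n = f (n + Pi.single j 1) := rfl

lemma star_shift_apply (j : Fin d) (f : ℓ²ℤ[d]) (n : Fin d → ℤ) :
    star (shift j) f n = f (n - Pi.single j 1) := by
  rw [ContinuousLinearMap.star_eq_adjoint, shift, adjoint_lpReindex]
  simp [sub_eq_add_neg]

lemma eq_smul_sum_shift (hL : IsDiscreteLaplacian d L) :
    L = (2⁻¹ : ℂ) • ∑ j, (shift j + star (shift j)) := by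
  ext f n
  simp only [hL f n, FunLike.coe_smul, FunLike.coe_sum, Pi.smul_apply, Finset.sum_apply,
    lp.coeFn_smul, lp.coeFn_sum, add_apply, lp.coeFn_add, Pi.add_apply, shift_apply,
    star_shift_apply, smul_eq_mul, one_div]

lemma isSelfAdjoint (hL : IsDiscreteLaplacian d L) : IsSelfAdjoint L := by
  rw [hL.eq_smul_sum_shift]
  exact .smul (by simp) (isSelfAdjoint_sum _ fun j _ => .add_star_self _)

lemma norm_le (hL : IsDiscreteLaplacian d L) : ‖L‖ ≤ d := by
  have h_shift : ∀ j : Fin d, ‖shift j‖ ≤ 1 := fun _ =>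
    LinearIsometry.norm_toContinuousLinearMap_le _
  calc ‖L‖ ≤ 2⁻¹ * ∑ j : Fin d, (‖shift j‖ + ‖star (shift j)‖) := by
        rw [hL.eq_smul_sum_shift, norm_smul]
        gcongr
        · simp
        refine (norm_sum_le _ _).trans (sum_le_sum fun j _ => norm_add_le _ _)
    _ ≤ 2⁻¹ * ∑ _j : Fin d, (1 + 1) := by
        gcongr with j
        · exact h_shift j
        · exact (norm_star _).trans_le (h_shift j)
    _ = d := by simp; ring

lemma spectrum_subset_segment (hL : IsDiscreteLaplacian d L) :
    spectrum ℂ L ⊆ {l : ℂ | l.im = 0 ∧ |l.re| ≤ d} :=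
  hL.isSelfAdjoint.spectrum_subset_segment.trans fun _ ⟨him, hre⟩ => ⟨him, hre.trans hL.norm_le⟩

lemma smul_sub_apply (hL : IsDiscreteLaplacian d L) (l : ℂ) (f : ℓ²ℤ[d]) (n : Fin d → ℤ) :
    (l • f - L f) n = l * f n - 2⁻¹ * ∑ j, (f (n + Pi.single j 1) + f (n - Pi.single j 1)) := by
  rw [lp.coeFn_sub, Pi.sub_apply, lp.coeFn_smul, Pi.smul_apply, smul_eq_mul, hL, one_div]

variable (θ : ℝ) {N : ℕ} {n : Fin d → ℤ}

lemma weylResidual_eq_zero_of_mem (hL : IsDiscreteLaplacian d L) (hn : n ∈ cube d 1 (N - 2)) :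
    (((d * Real.cos θ : ℝ) : ℂ) • weylVector d θ N - L (weylVector d θ N)) n = 0 := by
  have h_mem : n ∈ cube d 0 (N - 1) := cube_mono (by norm_num) (by omega) hn
  have h_add : ∀ j, n + Pi.single j 1 ∈ cube d 0 (N - 1) := fun j =>
    cube_mono (by norm_num) (by omega) (add_single_mem_cube hn j)
  have h_sub : ∀ j, n - Pi.single j 1 ∈ cube d 0 (N - 1) := fun j =>
    cube_mono (by norm_num) (by omega) (sub_single_mem_cube hn j)
  simp only [hL.smul_sub_apply, weylVector_of_mem h_mem, weylVector_of_mem (h_add _),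
    weylVector_of_mem (h_sub _), planeWave_add_single_add_sub_single, sum_const, card_univ,
    Fintype.card_fin, nsmul_eq_mul]
  push_cast
  ring

lemma weylResidual_eq_zero_of_notMem (hL : IsDiscreteLaplacian d L) (l : ℂ)
    (hn : n ∉ cube d (-1) N) : (l • weylVector d θ N - L (weylVector d θ N)) n = 0 := by
  have h_self : weylVector d θ N n = 0 :=
    weylVector_of_notMem fun h => hn (cube_mono (by norm_num) (by omega) h)
  have h_add : ∀ j, weylVector d θ N (n + Pi.single j 1) = 0 := fun j =>
    weylVector_of_notMem fun h => hn (by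
      simpa using cube_mono (by norm_num) (by omega) (sub_single_mem_cube h j))
  have h_sub : ∀ j, weylVector d θ N (n - Pi.single j 1) = 0 := fun j =>
    weylVector_of_notMem fun h => hn (by
      simpa using cube_mono (by norm_num) (by omega) (add_single_mem_cube h j))
  simp [hL.smul_sub_apply, h_self, h_add, h_sub]

lemma norm_weylResidual_apply_le (hL : IsDiscreteLaplacian d L) {l : ℂ} (hl : ‖l‖ ≤ d)
    (n : Fin d → ℤ) : ‖(l • weylVector d θ N - L (weylVector d θ N)) n‖ ≤ 2 * d := by
  have h_sum : ‖∑ j : Fin d, (weylVector d θ N (n + Pi.single j 1) +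
      weylVector d θ N (n - Pi.single j 1))‖ ≤ 2 * d := by
    refine (norm_sum_le _ _).trans ?_
    calc _ ≤ ∑ _j : Fin d, ((1 : ℝ) + 1) := sum_le_sum fun j _ => (norm_add_le _ _).trans
          (add_le_add norm_weylVector_apply_le norm_weylVector_apply_le)
      _ = 2 * d := by simp; ring
  rw [hL.smul_sub_apply]
  calc _ ≤ ‖l‖ * ‖weylVector d θ N n‖ + ‖(2⁻¹ : ℂ)‖ * (2 * d) :=
        (norm_sub_le _ _).trans (by rw [norm_mul, norm_mul]; gcongr)
    _ ≤ d * 1 + 2⁻¹ * (2 * d) := by gcongr; exacts [norm_weylVector_apply_le, by simp]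
    _ = 2 * d := by ring

lemma norm_weylResidual_sq_le (hL : IsDiscreteLaplacian d L) (hN : 2 ≤ N) :
    ‖((d * Real.cos θ : ℝ) : ℂ) • weylVector d θ N - L (weylVector d θ N)‖ ^ 2 ≤
      (2 * d) ^ 2 * (((N : ℝ) + 2) ^ d - ((N : ℝ) - 2) ^ d) := by
  have h_norm : ‖((d * Real.cos θ : ℝ) : ℂ)‖ ≤ d := by
    rw [Complex.norm_real, norm_mul, Real.norm_natCast]
    exact mul_le_of_le_one_right d.cast_nonneg (Real.abs_cos_le_one θ)
  have h_sub : cube d 1 (N - 2) ⊆ cube d (-1) N := cube_mono (by norm_num) (by omega)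
  rw [lp.norm_sq_eq_sum _ (s := cube d (-1) N \ cube d 1 (N - 2)) fun n hn => by
    rcases not_and_or.mp (mt mem_sdiff.mpr hn) with hn | hn
    · exact hL.weylResidual_eq_zero_of_notMem θ _ hn
    · exact hL.weylResidual_eq_zero_of_mem θ (not_not.mp hn)]
  calc _ ≤ #(cube d (-1) N \ cube d 1 (N - 2)) • (2 * (d : ℝ)) ^ 2 :=
        sum_le_card_nsmul _ _ _ fun n _ =>
          pow_le_pow_left₀ (norm_nonneg _) (hL.norm_weylResidual_apply_le θ h_norm n) 2
    _ = (2 * d) ^ 2 * (((N : ℝ) + 2) ^ d - ((N : ℝ) - 2) ^ d) := by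
      rw [card_sdiff_of_subset h_sub, nsmul_eq_mul, Nat.cast_sub (card_le_card h_sub),
        card_cube, card_cube]
      have h_outer : ((N + 1 - -1 : ℤ).toNat : ℝ) = N + 2 := by
        rw [show (N + 1 - -1 : ℤ) = ((N + 2 : ℕ) : ℤ) by push_cast; ring, Int.toNat_natCast]
        push_cast; ring
      have h_inner : ((N - 2 + 1 - 1 : ℤ).toNat : ℝ) = N - 2 := by
        rw [show (N - 2 + 1 - 1 : ℤ) = ((N - 2 : ℕ) : ℤ) by omega, Int.toNat_natCast,
          Nat.cast_sub hN]
        norm_num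
      push_cast [h_outer, h_inner]
      ring

lemma ofReal_mul_cos_mem_spectrum (hL : IsDiscreteLaplacian d L) :
    ((d * Real.cos θ : ℝ) : ℂ) ∈ spectrum ℂ L := by
  refine mem_spectrum_of_forall_exists_norm_lt fun ε hε => ?_
  have h_lim := (tendsto_add_pow_sub_sub_pow_div_pow 2 d).const_mul ((2 * (d : ℝ)) ^ 2)
  rw [mul_zero] at h_lim
  obtain ⟨N, hN, hN2⟩ :=
    ((h_lim.eventually (gt_mem_nhds (pow_pos hε 2))).and (eventually_ge_atTop 2)).exists
  refine ⟨weylVector d θ N, ?_⟩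
  have h_pos : (0 : ℝ) < (N : ℝ) ^ d := by positivity
  rw [← pow_lt_pow_iff_left₀ (norm_nonneg _) (by positivity) two_ne_zero, mul_pow,
    norm_weylVector_sq]
  rw [← mul_div_assoc, div_lt_iff₀ h_pos] at hN
  exact (hL.norm_weylResidual_sq_le θ hN2).trans_lt hN

lemma segment_subset_spectrum (hL : IsDiscreteLaplacian d L) :
    {l : ℂ | l.im = 0 ∧ |l.re| ≤ d} ⊆ spectrum ℂ L := by
  rintro l ⟨him, hre⟩
  obtain ⟨θ, hθ⟩ := exists_mul_cos_eq hre
  have hl : l = ((d * Real.cos θ : ℝ) : ℂ) := Complex.ext (by simp [hθ]) (by simp [him])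
  exact hl ▸ hL.ofReal_mul_cos_mem_spectrum θ

end IsDiscreteLaplacian

theorem statement19_general (d : ℕ)
    (L : lp (fun _ : Fin d → ℤ => ℂ) 2 →L[ℂ] lp (fun _ : Fin d → ℤ => ℂ) 2)
    (hL : IsDiscreteLaplacian d L) :
    spectrum ℂ L = {l : ℂ | l.im = 0 ∧ |l.re| ≤ d} :=
  hL.spectrum_subset_segment.antisymm hL.segment_subset_spectrum

/-- For every `d ≥ 1`, the spectrum of the discrete Laplacian on
`ℓ²(ℤᵈ)` equals `[-d,d] = {λ ∈ ℂ : Im λ = 0, |Re λ| ≤ d}`. -/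
theorem statement19 (d : ℕ) (hd : 1 ≤ d)
    (L : lp (fun _ : Fin d → ℤ => ℂ) 2 →L[ℂ] lp (fun _ : Fin d → ℤ => ℂ) 2)
    (hL : IsDiscreteLaplacian d L) :
    spectrum ℂ L = {l : ℂ | l.im = 0 ∧ |l.re| ≤ d} :=
  statement19_general d L hL

end
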